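/- arXiv:1003.1273 — 12 statements merged into one kernel-verified Lean document; each statement's English description precedes it below -/
import Mathlib

section
/- For every natural number n ≥ 1, the product of all primes p with n < p ≤ 2n is at most 4^n. -/
open Finset

/-- A prime `p ∈ (m, n]` divides `n!` but, as `n - m ≤ m < p`, neither `m!` nor `(n - m)!`. -/
theorem Nat.prod_primes_Ioc_dvd_choose {m n : ℕ} (h : n ≤ 2 * m) :
    (∏ p ∈ (Ioc m n).filter Nat.Prime, p) ∣ n.choose m := by
  refine prod_primes_dvd _ (fun p hp ↦ (mem_filter.1 hp).2.prime) fun p hp ↦ ?_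
  obtain ⟨⟨hmp, hpn⟩, hp⟩ := by simpa only [mem_filter, mem_Ioc] using hp
  exact hp.dvd_choose hmp (by omega) hpn

theorem primorial_segment_le_four_pow_general (n : ℕ) :
    (∏ p ∈ (Finset.Ioc n (2 * n)).filter Nat.Prime, p) ≤ 4 ^ n := by
  have hdvd : (∏ p ∈ (Ioc n (2 * n)).filter Nat.Prime, p) ∣ n.centralBinom := by
    rw [Nat.centralBinom_eq_two_mul_choose]
    exact Nat.prod_primes_Ioc_dvd_choose le_rfl
  exact (Nat.le_of_dvd n.centralBinom_pos hdvd).trans n.centralBinom_le_four_pow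

theorem primorial_segment_le_four_pow (n : ℕ) (hn : 1 ≤ n) :
    (∏ p ∈ (Finset.Ioc n (2 * n)).filter Nat.Prime, p) ≤ 4 ^ n :=
  primorial_segment_le_four_pow_general n
end

section
/- For every natural number n ≥ 1, θ(2n) − θ(n) ≤ 2n·log 2, where θ is the Chebyshev theta function. -/
/-- The Chebyshev theta function: the sum of the natural logarithms of all primes `p ≤ x`. -/
noncomputable def chebyshevTheta (x : ℕ) : ℝ :=
    ∑ p ∈ (Finset.range (x + 1)).filter Nat.Prime, Real.log p

/-! The primes in `(m, m + n]` all divide `(m + n).choose m` when `n ≤ m`, so their product is at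
most `2 ^ (m + n)`; taking logarithms gives `θ(m + n) - θ(m) ≤ (m + n) log 2`. -/

lemma chebyshevTheta_eq_log_primorial (x : ℕ) :
    chebyshevTheta x = Real.log (primorial x) := by
  rw [primorial, Nat.cast_prod, Real.log_prod]
  · rfl
  · intro p hp
    exact_mod_cast (Finset.mem_filter.1 hp).2.ne_zero

lemma chebyshevTheta_add_sub_le_log_choose {m n : ℕ} (h : n ≤ m) :
    chebyshevTheta (m + n) - chebyshevTheta m ≤ Real.log ((m + n).choose m) := by
  have hm : (0 : ℝ) < primorial m := by exact_mod_cast primorial_pos m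
  have hchoose : (0 : ℝ) < (m + n).choose m := by exact_mod_cast Nat.choose_pos (by omega)
  have hprim : (primorial (m + n) : ℝ) ≤ primorial m * (m + n).choose m := by
    exact_mod_cast primorial_add_le h
  rw [chebyshevTheta_eq_log_primorial, chebyshevTheta_eq_log_primorial, sub_le_iff_le_add',
    ← Real.log_mul hm.ne' hchoose.ne']
  exact Real.log_le_log (by exact_mod_cast primorial_pos _) hprim

lemma chebyshevTheta_add_sub_le {m n : ℕ} (h : n ≤ m) :
    chebyshevTheta (m + n) - chebyshevTheta m ≤ (m + n) * Real.log 2 := by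
  have hchoose : ((m + n).choose m : ℝ) ≤ 2 ^ (m + n) := by
    exact_mod_cast Nat.choose_le_two_pow (m + n) m
  calc chebyshevTheta (m + n) - chebyshevTheta m ≤ Real.log ((m + n).choose m) :=
        chebyshevTheta_add_sub_le_log_choose h
    _ ≤ Real.log (2 ^ (m + n)) :=
        Real.log_le_log (by exact_mod_cast Nat.choose_pos (by omega)) hchoose
    _ = (m + n) * Real.log 2 := by rw [Real.log_pow]; push_cast; ring

theorem chebyshevTheta_two_mul_sub_general (n : ℕ) :
    chebyshevTheta (2 * n) - chebyshevTheta n ≤ (2 * n) * Real.log 2 := by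
  simpa only [two_mul, Nat.cast_add] using chebyshevTheta_add_sub_le (le_refl n)

theorem chebyshevTheta_two_mul_sub (n : ℕ) (hn : 1 ≤ n) :
    chebyshevTheta (2 * n) - chebyshevTheta n ≤ (2 * n) * Real.log 2 :=
  chebyshevTheta_two_mul_sub_general n
end

section
/- For every natural number n, θ(n) ≤ (2·log 2)·n, where θ is the Chebyshev theta function (Chebyshev's upper bound). -/
theorem chebyshevTheta_eq_theta (n : ℕ) : chebyshevTheta n = Chebyshev.theta n := by
  rw [Chebyshev.theta_eq_sum_primesLE_log, Nat.primesLE_eq_filter_range, chebyshevTheta]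

theorem chebyshev_upper_bound (n : ℕ) :
    chebyshevTheta n ≤ (2 * Real.log 2) * n := by
  rw [chebyshevTheta_eq_theta, ← Real.log_four_eq]
  exact Chebyshev.theta_le_log4_mul_x n.cast_nonneg
end

section
/- Fact 2: If P is a Z-polynomial of darga d1 and Q is a Z-polynomial of darga d2, then the product P·Q is a Z-polynomial of darga d1 + d2. -/
/-!
Without the condition `P ≠ 0`, the Z-polynomials of darga `d` form an additive submonoid of
`ℕ[X]`. Peeling a symmetric unimodal coefficient sequence into horizontal layers shows that this
submonoid is generated by the polynomials `X ^ a * (1 + X + ⋯ + X ^ (d - 2a))` with `2a ≤ d`.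
The product of two generators is `X ^ (a + b)` times a product of two all-ones polynomials, whose
coefficients `min k m + 1 - (k - n)` form a symmetric trapezoid. So products of generators, and
hence all products, land in the submonoid of darga `d₁ + d₂`.
-/

/-- A `Z`-polynomial of darga `d`: a nonzero polynomial with natural-number coefficients
whose coefficient sequence is symmetric about `d/2` (so its trailing degree plus its degree
equals `d`), vanishes above `d`, and weakly increases up to the middle (hence is unimodal). -/
def IsZPoly (P : Polynomial ℕ) (d : ℕ) : Prop :=
  P ≠ 0 ∧ (∀ i ≤ d, P.coeff i = P.coeff (d - i)) ∧ (∀ i, d < i → P.coeff i = 0) ∧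
    (∀ i, 2 * (i + 1) ≤ d → P.coeff i ≤ P.coeff (i + 1))

open Polynomial Finset Pointwise

namespace IsZPoly

def zPolyCone (d : ℕ) : AddSubmonoid ℕ[X] where
  carrier := {P | (∀ i ≤ d, P.coeff i = P.coeff (d - i)) ∧ (∀ i, d < i → P.coeff i = 0) ∧
    (∀ i, 2 * (i + 1) ≤ d → P.coeff i ≤ P.coeff (i + 1))}
  zero_mem' := by simp
  add_mem' := by
    rintro P Q ⟨hPs, hPv, hPm⟩ ⟨hQs, hQv, hQm⟩
    refine ⟨fun i hi => ?_, fun i hi => ?_, fun i hi => ?_⟩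
    · simp only [coeff_add, hPs i hi, hQs i hi]
    · simp only [coeff_add, hPv i hi, hQv i hi]
    · simp only [coeff_add]
      exact add_le_add (hPm i hi) (hQm i hi)

theorem mem_zPolyCone_of_coeff {P : ℕ[X]} {d : ℕ} (f : ℕ → ℕ) (hf : ∀ i, P.coeff i = f i)
    (hsymm : ∀ i ≤ d, f i = f (d - i)) (hvan : ∀ i, d < i → f i = 0)
    (hmono : ∀ i, 2 * (i + 1) ≤ d → f i ≤ f (i + 1)) : P ∈ zPolyCone d := by
  refine ⟨?_, ?_, ?_⟩ <;> simpa only [hf]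

theorem X_pow_mul_mem_zPolyCone {P : ℕ[X]} {d : ℕ} (hP : P ∈ zPolyCone d) (c : ℕ) :
    X ^ c * P ∈ zPolyCone (d + 2 * c) := by
  obtain ⟨hsymm, hvan, hmono⟩ := hP
  refine mem_zPolyCone_of_coeff _ (coeff_X_pow_mul' P c) (fun i hi => ?_) (fun i hi => ?_)
    (fun i hi => ?_)
  · rcases lt_or_ge i c with hic | hci
    · rw [if_neg (by omega), if_pos (by omega), hvan _ (by omega)]
    rcases le_or_gt i (d + c) with hid | hdi
    · rw [if_pos hci, if_pos (by omega), hsymm _ (by omega)]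
      congr 1
      omega
    · rw [if_pos hci, if_neg (by omega), hvan _ (by omega)]
  · rw [if_pos (by omega), hvan _ (by omega)]
  · split_ifs
    · rw [show i + 1 - c = i - c + 1 by omega]
      exact hmono _ (by omega)
    · omega
    · exact Nat.zero_le _
    · exact le_rfl

noncomputable def geomPoly (m : ℕ) : ℕ[X] := ∑ i ∈ range (m + 1), X ^ i

theorem coeff_geomPoly (m i : ℕ) : (geomPoly m).coeff i = if i ≤ m then 1 else 0 := by
  simp [geomPoly, coeff_X_pow]

theorem coeff_geomPoly_mul_geomPoly (m n k : ℕ) :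
    (geomPoly m * geomPoly n).coeff k = min k m + 1 - (k - n) := by
  rw [coeff_mul, Nat.sum_antidiagonal_eq_sum_range_succ_mk]
  simp only [coeff_geomPoly, boole_mul, ← ite_and, sum_boole, Nat.cast_id]
  have : (range (k + 1)).filter (fun i => i ≤ m ∧ k - i ≤ n) = Icc (k - n) (min k m) := by
    ext i
    simp only [mem_filter, mem_range, mem_Icc, le_min_iff]
    omega
  rw [this, Nat.card_Icc]

theorem geomPoly_mul_geomPoly_mem_zPolyCone (m n : ℕ) :
    geomPoly m * geomPoly n ∈ zPolyCone (m + n) :=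
  mem_zPolyCone_of_coeff _ (coeff_geomPoly_mul_geomPoly m n) (fun i hi => by omega)
    (fun i hi => by omega) (fun i hi => by omega)

def layerWeights (f : ℕ → ℕ) : ℕ → ℕ
  | 0 => f 0
  | a + 1 => f (a + 1) - f a

theorem sum_range_layerWeights {f : ℕ → ℕ} {m : ℕ} (hf : ∀ a < m, f a ≤ f (a + 1)) :
    ∑ a ∈ range (m + 1), layerWeights f a = f m := by
  induction m with
  | zero => simp [layerWeights]
  | succ m ih =>
    rw [sum_range_succ, ih fun a ha => hf a (by omega), layerWeights]
    have := hf m (by omega)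
    omega

def zPolyGenerators (d : ℕ) : Set ℕ[X] :=
  {B | ∃ a, 2 * a ≤ d ∧ B = X ^ a * geomPoly (d - 2 * a)}

theorem coeff_X_pow_mul_geomPoly (a m i : ℕ) :
    (X ^ a * geomPoly m).coeff i = if a ≤ i ∧ i ≤ a + m then 1 else 0 := by
  rw [coeff_X_pow_mul', coeff_geomPoly]
  split_ifs <;> omega

theorem eq_sum_zPolyGenerators {P : ℕ[X]} {d : ℕ} (hP : P ∈ zPolyCone d) :
    P = ∑ a ∈ range (d / 2 + 1), layerWeights P.coeff a • (X ^ a * geomPoly (d - 2 * a)) := by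
  obtain ⟨hsymm, hvan, hmono⟩ := hP
  ext i
  simp only [finsetSum_coeff, coeff_smul, coeff_X_pow_mul_geomPoly, smul_eq_mul, mul_boole,
    ← sum_filter]
  rcases le_or_gt i d with hid | hdi
  · have hlayers : (range (d / 2 + 1)).filter (fun a => a ≤ i ∧ i ≤ a + (d - 2 * a))
        = range (min i (d - i) + 1) := by
      ext a
      simp only [mem_filter, mem_range]
      omega
    rw [hlayers, sum_range_layerWeights fun a ha => hmono a (by omega)]
    rcases le_total i (d - i) with h | h
    · rw [min_eq_left h]
    · rw [min_eq_right h, ← hsymm i hid]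
  · rw [hvan i hdi, eq_comm, sum_eq_zero_iff]
    intro a ha
    simp only [mem_filter, mem_range] at ha
    omega

theorem mem_closure_zPolyGenerators {P : ℕ[X]} {d : ℕ} (hP : P ∈ zPolyCone d) :
    P ∈ AddSubmonoid.closure (zPolyGenerators d) := by
  rw [eq_sum_zPolyGenerators hP]
  refine AddSubmonoid.sum_mem _ fun a ha => AddSubmonoid.nsmul_mem _ ?_ _
  exact AddSubmonoid.subset_closure ⟨a, by simp only [mem_range] at ha; omega, rfl⟩

theorem mul_mem_zPolyCone_of_mem_zPolyGenerators {B C : ℕ[X]} {d₁ d₂ : ℕ}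
    (hB : B ∈ zPolyGenerators d₁) (hC : C ∈ zPolyGenerators d₂) : B * C ∈ zPolyCone (d₁ + d₂) := by
  obtain ⟨a, ha, rfl⟩ := hB
  obtain ⟨b, hb, rfl⟩ := hC
  have hprod : X ^ a * geomPoly (d₁ - 2 * a) * (X ^ b * geomPoly (d₂ - 2 * b))
      = X ^ (a + b) * (geomPoly (d₁ - 2 * a) * geomPoly (d₂ - 2 * b)) := by ring
  have hdarga : d₁ + d₂ = d₁ - 2 * a + (d₂ - 2 * b) + 2 * (a + b) := by omega
  rw [hprod, hdarga]
  exact X_pow_mul_mem_zPolyCone (geomPoly_mul_geomPoly_mem_zPolyCone _ _) _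

theorem mul_mem_zPolyCone {P Q : ℕ[X]} {d₁ d₂ : ℕ} (hP : P ∈ zPolyCone d₁)
    (hQ : Q ∈ zPolyCone d₂) : P * Q ∈ zPolyCone (d₁ + d₂) := by
  have hle : AddSubmonoid.closure (zPolyGenerators d₁) * AddSubmonoid.closure (zPolyGenerators d₂)
      ≤ zPolyCone (d₁ + d₂) := by
    rw [AddSubmonoid.closure_mul_closure, AddSubmonoid.closure_le]
    rintro _ ⟨B, hB, C, hC, rfl⟩
    exact mul_mem_zPolyCone_of_mem_zPolyGenerators hB hC
  exact hle (AddSubmonoid.mul_mem_mul (mem_closure_zPolyGenerators hP)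
    (mem_closure_zPolyGenerators hQ))

end IsZPoly

theorem IsZPoly.mul {P Q : Polynomial ℕ} {d1 d2 : ℕ} (hP : IsZPoly P d1) (hQ : IsZPoly Q d2) :
    IsZPoly (P * Q) (d1 + d2) :=
  ⟨mul_ne_zero hP.1 hQ.1, IsZPoly.mul_mem_zPolyCone hP.2 hQ.2⟩
end

section
/- For natural numbers a ≤ b and c ≤ d, the product (x^a + x^{a+1} + ⋯ + x^b)·(x^c + x^{c+1} + ⋯ + x^d) is a Z-polynomial of darga (a+b)+(c+d). -/
/-! The `n`-th coefficient of the product counts the `i ∈ [a, b]` with `n - i ∈ [c, d]`, i.e. it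
is the length of the interval `[max a (n - d), min b (n - c)]`. This piecewise linear function of
`n` is visibly symmetric under `n ↦ (a + b) + (c + d) - n`, vanishes beyond `b + d`, and is
nondecreasing up to the middle. -/

open Polynomial Finset

lemma coeff_sum_Icc_X_pow {R : Type*} [Semiring R] (a b n : ℕ) :
    (∑ i ∈ Icc a b, (X : R[X]) ^ i).coeff n = if n ∈ Icc a b then 1 else 0 := by
  simp [finsetSum_coeff, coeff_X_pow]

lemma coeff_sum_Icc_X_pow_mul_sum_Icc_X_pow (a b c d n : ℕ) :
    ((∑ i ∈ Icc a b, (X : ℕ[X]) ^ i) * (∑ i ∈ Icc c d, (X : ℕ[X]) ^ i)).coeff n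
      = #{i ∈ range (n + 1) | i ∈ Icc a b ∧ n - i ∈ Icc c d} := by
  rw [coeff_mul, Nat.sum_antidiagonal_eq_sum_range_succ_mk, card_filter]
  refine sum_congr rfl fun i _ ↦ ?_
  simp only [coeff_sum_Icc_X_pow, boole_mul, ite_and]

-- The `if` guards against the truncated subtraction `n - c` when `n < c`.
lemma coeff_sum_Icc_X_pow_mul_sum_Icc_X_pow_eq (a b c d n : ℕ) :
    ((∑ i ∈ Icc a b, (X : ℕ[X]) ^ i) * (∑ i ∈ Icc c d, (X : ℕ[X]) ^ i)).coeff n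
      = if c ≤ n then min b (n - c) + 1 - max a (n - d) else 0 := by
  rw [coeff_sum_Icc_X_pow_mul_sum_Icc_X_pow]
  split_ifs with hn
  · rw [← Nat.card_Icc]
    congr 1
    ext i
    simp only [mem_filter, mem_range, mem_Icc, max_le_iff, le_min_iff]
    omega
  · rw [card_eq_zero, filter_eq_empty_iff]
    simp only [mem_range, mem_Icc]
    omega

theorem atom_mul_atom_isZPoly (a b c d : ℕ) (hab : a ≤ b) (hcd : c ≤ d) :
    IsZPoly ((∑ i ∈ Finset.Icc a b, Polynomial.X ^ i) *
      (∑ i ∈ Finset.Icc c d, Polynomial.X ^ i)) ((a + b) + (c + d)) := by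
  simp only [IsZPoly, coeff_sum_Icc_X_pow_mul_sum_Icc_X_pow_eq]
  refine ⟨fun h ↦ ?_, fun i _ ↦ ?_, fun i _ ↦ ?_, fun i _ ↦ ?_⟩
  · have hac := congrArg (coeff · (a + c)) h
    simp only [coeff_sum_Icc_X_pow_mul_sum_Icc_X_pow_eq, coeff_zero] at hac
    split_ifs at hac <;> omega
  all_goals split_ifs <;> omega
end

section
/- For every natural number n ≥ 1 and every natural number k with 2k < 7n, the coefficient of x^k in (x + x^2 + x^3 + x^4 + x^5 + x^6)^n is at most the coefficient of x^{k+1}. (Probabilistically: when a fair die is rolled n times, winning k+1 dollars is at least as likely as winning k dollars whenever k is less than the expected gain 7n/2.) -/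
/-!
Write the die polynomial as `X * G` with `G = 1 + X + ⋯ + X⁵`. The property
`coeff a ≤ coeff b` for `a ≤ b`, `a + b ≤ N` survives multiplication by `1 + X + ⋯ + X^m` at the
cost of raising `N` to `N + m`: with `G' = 1 + ⋯ + X^m`, expanding `p * (G' + X^(m+1))` at `a`
and `p * (1 + X * G')` at `b` splits the comparison into two comparisons of the same kind.
Hence `G^n` has the property for `5n`, `X^n * G^n` for `7n`, and `2k < 7n` is `k + (k+1) ≤ 7n`.
-/

open Polynomial Finset

namespace Polynomial

variable {R : Type*} [Semiring R]

def CoeffRisesToCenter [LE R] (p : R[X]) (N : ℕ) : Prop :=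
  ∀ ⦃a b : ℕ⦄, a ≤ b → a + b ≤ N → p.coeff a ≤ p.coeff b

theorem sum_Icc_one_X_pow (m : ℕ) : ∑ i ∈ Icc 1 m, (X : R[X]) ^ i = X * ∑ i ∈ range m, X ^ i := by
  induction m with
  | zero => simp
  | succ m ih =>
    rw [sum_Icc_succ_top (by omega), ih, sum_range_succ, mul_add, pow_succ']

theorem coeffRisesToCenter_zero [Preorder R] (p : R[X]) : p.CoeffRisesToCenter 0 := by
  intro a b hab hN
  obtain rfl : a = b := by omega
  exact le_rfl

section Ordered

variable [PartialOrder R] [CanonicallyOrderedAdd R]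

theorem CoeffRisesToCenter.X_pow_mul {p : R[X]} {N : ℕ} (hp : p.CoeffRisesToCenter N) (j : ℕ) :
    (X ^ j * p).CoeffRisesToCenter (N + 2 * j) := by
  intro a b hab hN
  simp only [coeff_X_pow_mul']
  split_ifs
  · exact hp (by omega) (by omega)
  · omega
  · exact zero_le
  · exact le_rfl

variable [IsOrderedAddMonoid R]

theorem CoeffRisesToCenter.mul_geom_sum {p : R[X]} {N : ℕ} (hp : p.CoeffRisesToCenter N)
    (m : ℕ) : (p * ∑ i ∈ range (m + 1), X ^ i).CoeffRisesToCenter (N + m) := by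
  induction m with
  | zero => simpa using hp
  | succ m ih =>
    have hleft : p * ∑ i ∈ range (m + 2), X ^ i =
        p * ∑ i ∈ range (m + 1), X ^ i + X ^ (m + 1) * p := by
      rw [sum_range_succ, mul_add, (commute_X_pow p _).eq]
    have hright : p * ∑ i ∈ range (m + 2), X ^ i = p + X * (p * ∑ i ∈ range (m + 1), X ^ i) := by
      rw [sum_range_succ', pow_zero, mul_add, mul_one, add_comm, mul_sum, mul_sum, mul_sum]
      simp only [pow_succ', ← mul_assoc, (commute_X p).eq]
    set G := ∑ i ∈ range (m + 1), (X : R[X]) ^ i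
    intro a b hab hN
    rcases hab.eq_or_lt with rfl | hab
    · exact le_rfl
    obtain ⟨b, rfl⟩ : ∃ b', b = b' + 1 := ⟨b - 1, by omega⟩
    calc (p * ∑ i ∈ range (m + 2), X ^ i).coeff a
        = (p * G).coeff a + (X ^ (m + 1) * p).coeff a := by rw [hleft, coeff_add]
      _ ≤ (p * G).coeff b + p.coeff (b + 1) := by
        refine add_le_add (ih (by omega) (by omega)) ?_
        rw [coeff_X_pow_mul']
        split_ifs
        · exact hp (by omega) (by omega)
        · exact zero_le
      _ = (p * ∑ i ∈ range (m + 2), X ^ i).coeff (b + 1) := by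
        rw [hright, coeff_add, coeff_X_mul, add_comm]

theorem coeffRisesToCenter_geom_sum_pow (m n : ℕ) :
    ((∑ i ∈ range (m + 1), (X : R[X]) ^ i) ^ n).CoeffRisesToCenter (m * n) := by
  induction n with
  | zero => exact coeffRisesToCenter_zero _
  | succ n ih => simpa only [pow_succ, mul_add, mul_one] using ih.mul_geom_sum m

end Ordered

end Polynomial

theorem die_rolls_coeff_increasing_general (n k : ℕ) (hk : 2 * k < 7 * n) :
    (((∑ i ∈ Finset.Icc 1 6, Polynomial.X ^ i : Polynomial ℕ)) ^ n).coeff k ≤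
      (((∑ i ∈ Finset.Icc 1 6, Polynomial.X ^ i : Polynomial ℕ)) ^ n).coeff (k + 1) := by
  have hrise : ((∑ i ∈ Icc 1 6, X ^ i : ℕ[X]) ^ n).CoeffRisesToCenter (5 * n + 2 * n) := by
    rw [sum_Icc_one_X_pow, mul_pow]
    exact (coeffRisesToCenter_geom_sum_pow 5 n).X_pow_mul n
  exact hrise (Nat.le_succ k) (by omega)

theorem die_rolls_coeff_increasing (n k : ℕ) (hn : 1 ≤ n) (hk : 2 * k < 7 * n) :
    (((∑ i ∈ Finset.Icc 1 6, Polynomial.X ^ i : Polynomial ℕ)) ^ n).coeff k ≤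
      (((∑ i ∈ Finset.Icc 1 6, Polynomial.X ^ i : Polynomial ℕ)) ^ n).coeff (k + 1) :=
  die_rolls_coeff_increasing_general n k hk
end

section
/- For natural numbers n and k with 2k < n, there exists an injection f from the k-element subsets of {1,…,n} to the (k+1)-element subsets of {1,…,n} such that S ⊆ f(S) for every k-element subset S. -/
/-!
Hall's marriage theorem applied to the inclusion relation between `k`-sets and `(k+1)`-sets.
Hall's condition is the upward local LYM inequality: a family `𝒜` of `k`-subsets of an `n`-set
satisfies `#𝒜 * (n - k) ≤ #(∂⁺ 𝒜) * (k + 1)` (the downward one applied to the complements),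
and `k + 1 ≤ n - k` makes this `#𝒜 ≤ #(∂⁺ 𝒜)`.
-/

open Finset
open scoped FinsetFamily

namespace Finset

variable {α : Type*} [DecidableEq α] [Fintype α] {𝒜 : Finset (Finset α)} {r : ℕ}

theorem card_mul_le_card_upShadow_mul (h𝒜 : (𝒜 : Set (Finset α)).Sized r) :
    #𝒜 * (Fintype.card α - r) ≤ #(∂⁺ 𝒜) * (r + 1) := by
  rcases le_or_gt r (Fintype.card α) with hr | hr
  · simpa [Nat.sub_sub_self hr] using card_mul_le_card_shadow_mul h𝒜.compls
  · simp [Nat.sub_eq_zero_of_le hr.le]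

theorem card_le_card_upShadow (h𝒜 : (𝒜 : Set (Finset α)).Sized r)
    (hr : 2 * r < Fintype.card α) : #𝒜 ≤ #(∂⁺ 𝒜) :=
  Nat.le_of_mul_le_mul_right
    ((Nat.mul_le_mul_left _ (by omega)).trans (card_mul_le_card_upShadow_mul h𝒜)) r.succ_pos

theorem exists_injective_subset_card_succ (hr : 2 * r < Fintype.card α) :
    ∃ f : {s : Finset α // #s = r} → {t : Finset α // #t = r + 1},
      Function.Injective f ∧ ∀ s, s.1 ⊆ (f s).1 := by
  let supersets (s : {s : Finset α // #s = r}) : Finset {t : Finset α // #t = r + 1} :=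
    univ.filter fun t ↦ s.1 ⊆ t.1
  suffices hall : ∀ A : Finset {s : Finset α // #s = r}, #A ≤ #(A.biUnion supersets) by
    obtain ⟨f, hf, hsub⟩ := (all_card_le_biUnion_card_iff_existsInjective' supersets).1 hall
    exact ⟨f, hf, fun s ↦ (mem_filter.1 (hsub s)).2⟩
  intro A
  have hsized : ((A.map (.subtype _) : Finset (Finset α)) : Set (Finset α)).Sized r := by
    intro _ hs
    obtain ⟨s, -, rfl⟩ := mem_map.1 (mem_coe.1 hs)
    exact s.2
  have hupShadow : ∂⁺ (A.map (.subtype _)) ⊆ (A.biUnion supersets).map (.subtype _) := by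
    intro t ht
    obtain ⟨_, hmem, hst, hcard⟩ := mem_upShadow_iff_exists_mem_card_add_one.1 ht
    obtain ⟨s, hs, rfl⟩ := mem_map.1 hmem
    refine mem_map.2 ⟨⟨t, hcard.trans (congrArg (· + 1) s.2)⟩, mem_biUnion.2 ⟨s, hs, ?_⟩, rfl⟩
    simpa [supersets] using hst
  calc #A = #(A.map (.subtype _)) := (card_map _).symm
    _ ≤ #(∂⁺ (A.map (.subtype _))) := card_le_card_upShadow hsized hr
    _ ≤ #(A.biUnion supersets) := (card_le_card hupShadow).trans_eq (card_map _)

end Finset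

theorem exists_superset_injection (n k : ℕ) (h : 2 * k < n) :
    ∃ f : {S : Finset (Fin n) // S.card = k} → {T : Finset (Fin n) // T.card = k + 1},
      Function.Injective f ∧ ∀ S, S.1 ⊆ (f S).1 :=
  exists_injective_subset_card_succ (by rwa [Fintype.card_fin])
end

section
/- For every natural number n, the Boolean lattice of all subsets of {1,…,n} admits a symmetric chain decomposition: the collection of all subsets of {1,…,n} can be partitioned into chains, where each chain consists of sets S_r ⊂ S_{r+1} ⊂ ⋯ ⊂ S_{n−r} for some r with 2r ≤ n, with |S_i| = i for each r ≤ i ≤ n−r (so each consecutive pair differs by adding one element, and the smallest and largest cardinalities in each chain sum to n). -/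
/-!
Induction on the ground set (de Bruijn, Tengbergen, Kruyswijk). Given a symmetric chain
decomposition of the subsets of `s` and `a ∉ s`, each chain `S_r ⊂ ⋯ ⊂ S_{n-r}` gives the two chains
`S_r ⊂ ⋯ ⊂ S_{n-r} ⊂ S_{n-r} ∪ {a}` and `S_r ∪ {a} ⊂ ⋯ ⊂ S_{n-r-1} ∪ {a}`, both symmetric in the
subsets of `insert a s`. A set `T ⊆ insert a s` lies in exactly one chain built from the chain
containing `T.erase a`: in the first one iff `a ∉ T` or `T.erase a` is the top `S_{n-r}`.
-/

open Finset

variable {α : Type*} [DecidableEq α]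

def IsSaturatedChain (a b : ℕ) (C : Finset (Finset α)) : Prop :=
  ∃ f : ℕ → Finset α, (∀ i, a ≤ i → i ≤ b → #(f i) = i) ∧
    (∀ i, a ≤ i → i < b → f i ⊆ f (i + 1)) ∧ C = (Icc a b).image f

def IsSymmetricChain (n : ℕ) (C : Finset (Finset α)) : Prop :=
  ∃ r, 2 * r ≤ n ∧ IsSaturatedChain r (n - r) C

theorem sup_image_Icc_of_subset_succ {a b : ℕ} {f : ℕ → Finset α}
    (hf : ∀ i, a ≤ i → i < b → f i ⊆ f (i + 1)) (hab : a ≤ b) :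
    ((Icc a b).image f).sup id = f b := by
  have hmono : MonotoneOn f (Set.Icc a b) :=
    monotoneOn_of_le_succ Set.ordConnected_Icc fun i _ hi hsi => by
      rw [Order.succ_eq_add_one] at hsi ⊢
      exact hf i hi.1 (Nat.lt_of_succ_le hsi.2)
  refine le_antisymm (Finset.sup_le ?_) (le_sup (f := id) (mem_image_of_mem f ?_))
  · simp only [mem_image, mem_Icc, id]
    rintro _ ⟨i, hi, rfl⟩
    exact hmono hi ⟨hab, le_rfl⟩ hi.2
  · simp [hab]

namespace IsSaturatedChain

variable {a b : ℕ} {C : Finset (Finset α)}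

theorem sup_mem (h : IsSaturatedChain a b C) (hab : a ≤ b) : C.sup id ∈ C := by
  obtain ⟨f, -, hf, rfl⟩ := h
  rw [sup_image_Icc_of_subset_succ hf hab]
  exact mem_image_of_mem f (by simp [hab])

theorem card_sup (h : IsSaturatedChain a b C) (hab : a ≤ b) : #(C.sup id) = b := by
  obtain ⟨f, hcard, hf, rfl⟩ := h
  rw [sup_image_Icc_of_subset_succ hf hab, hcard b hab le_rfl]

theorem lt_of_nonempty_erase_sup (h : IsSaturatedChain a b C)
    (hC : (C.erase (C.sup id)).Nonempty) : a < b := by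
  obtain ⟨f, -, hf, rfl⟩ := h
  obtain ⟨S, hS⟩ := hC
  obtain ⟨hne, i, hi, rfl⟩ : _ ∧ ∃ i ∈ Icc a b, f i = S := by
    simpa only [mem_erase, mem_image] using hS
  rw [mem_Icc] at hi
  rw [sup_image_Icc_of_subset_succ hf (hi.1.trans hi.2)] at hne
  have hib : i ≠ b := fun hib => hne (by rw [hib])
  omega

theorem insert_of_forall_subset (h : IsSaturatedChain a b C) (hab : a ≤ b) {T : Finset α}
    (hT : #T = b + 1) (hCT : ∀ S ∈ C, S ⊆ T) : IsSaturatedChain a (b + 1) (insert T C) := by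
  obtain ⟨f, hcard, hf, rfl⟩ := h
  refine ⟨Function.update f (b + 1) T, fun i hai hib => ?_, fun i hai hib => ?_, ?_⟩
  · rcases hib.eq_or_lt with rfl | hib
    · rw [Function.update_self, hT]
    · rw [Function.update_of_ne hib.ne]
      exact hcard i hai (by omega)
  · rw [Function.update_of_ne (by omega)]
    rcases (Nat.lt_succ_iff.1 hib).eq_or_lt with rfl | hib
    · simpa using hCT (f i) (mem_image_of_mem f (by simp [hai]))
    · rw [Function.update_of_ne (by omega)]
      exact hf i hai hib
  · rw [← insert_Icc_right_eq_Icc_add_one (by omega), image_insert, Function.update_self]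
    congr 1
    refine image_congr fun i hi => ?_
    rw [Function.update_of_ne (Nat.lt_succ_of_le (mem_Icc.1 hi).2).ne]

theorem erase_sup (h : IsSaturatedChain a (b + 1) C) (hab : a ≤ b) :
    IsSaturatedChain a b (C.erase (C.sup id)) := by
  obtain ⟨f, hcard, hf, rfl⟩ := h
  refine ⟨f, fun i hai hib => hcard i hai (by omega), fun i hai hib => hf i hai (by omega), ?_⟩
  have hf_top : f (b + 1) ∉ (Icc a b).image f := by
    simp only [mem_image, mem_Icc, not_exists, not_and]
    intro i ⟨hai, hib⟩ hfi
    have := hcard i hai (by omega)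
    rw [hfi, hcard (b + 1) (by omega) le_rfl] at this
    omega
  rw [sup_image_Icc_of_subset_succ hf (by omega), ← insert_Icc_right_eq_Icc_add_one (by omega),
    image_insert, erase_insert hf_top]

theorem image_insert (h : IsSaturatedChain a b C) {x : α} (hx : ∀ S ∈ C, x ∉ S) :
    IsSaturatedChain (a + 1) (b + 1) (C.image (insert x)) := by
  obtain ⟨f, hcard, hf, rfl⟩ := h
  have hxf : ∀ i, a ≤ i → i ≤ b → x ∉ f i := fun i hai hib =>
    hx (f i) (mem_image_of_mem f (by simp [hai, hib]))
  refine ⟨fun i => insert x (f (i - 1)), fun i hai hib => ?_, fun i hai hib => ?_, ?_⟩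
  · rw [card_insert_of_notMem (hxf _ (by omega) (by omega)), hcard _ (by omega) (by omega)]
    omega
  · have := insert_subset_insert x (hf (i - 1) (by omega) (by omega))
    rwa [Nat.sub_add_cancel (by omega)] at this
  · rw [← image_add_right_Icc, image_image, image_image]
    rfl

end IsSaturatedChain

theorem IsSymmetricChain.sup_mem {n : ℕ} {C : Finset (Finset α)} (h : IsSymmetricChain n C) :
    C.sup id ∈ C := by
  obtain ⟨r, hr, hC⟩ := h
  exact hC.sup_mem (by omega)

theorem Finpartition.existsUnique_mem_biUnion {β : Type*} [DecidableEq β] {A : Finset α}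
    (P : Finpartition A) {G : Finset α → Finset (Finset β)} {x : α} {y : β} (hx : x ∈ A)
    (hG : ∀ C ∈ P.parts, x ∈ C → ∃! D, D ∈ G C ∧ y ∈ D)
    (hGx : ∀ C ∈ P.parts, ∀ D ∈ G C, y ∈ D → x ∈ C) :
    ∃! D, D ∈ P.parts.biUnion G ∧ y ∈ D := by
  obtain ⟨C, ⟨hC, hxC⟩, hC_unique⟩ := P.existsUnique_mem hx
  obtain ⟨D, ⟨hD, hyD⟩, hD_unique⟩ := hG C hC hxC
  refine ⟨D, ⟨mem_biUnion.2 ⟨C, hC, hD⟩, hyD⟩, ?_⟩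
  rintro D' ⟨hD', hyD'⟩
  obtain ⟨C', hC', hD'C'⟩ := mem_biUnion.1 hD'
  obtain rfl := hC_unique C' ⟨hC', hGx C' hC' D' hD'C' hyD'⟩
  exact hD_unique D' ⟨hD'C', hyD'⟩

theorem existsUnique_mem_filter_nonempty_pair {X Y : Finset α} {x : α}
    (h : Xor (x ∈ X) (x ∈ Y)) :
    ∃! D, D ∈ ({X, Y} : Finset (Finset α)).filter Finset.Nonempty ∧ x ∈ D := by
  have hmem : ∀ D, D ∈ ({X, Y} : Finset (Finset α)).filter Finset.Nonempty ∧ x ∈ D ↔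
      (D = X ∨ D = Y) ∧ x ∈ D := fun D => by
    simp only [mem_filter, mem_insert, mem_singleton]
    exact ⟨fun h => ⟨h.1.1, h.2⟩, fun h => ⟨⟨h.1, x, h.2⟩, h.2⟩⟩
  simp only [hmem]
  rcases h with ⟨hX, hY⟩ | ⟨hY, hX⟩
  · exact ⟨X, ⟨Or.inl rfl, hX⟩, by rintro D ⟨rfl | rfl, hD⟩ <;> tauto⟩
  · exact ⟨Y, ⟨Or.inr rfl, hY⟩, by rintro D ⟨rfl | rfl, hD⟩ <;> tauto⟩

section SplitChain

variable {a : α} {C : Finset (Finset α)}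

def extendChain (a : α) (C : Finset (Finset α)) : Finset (Finset α) :=
  insert (insert a (C.sup id)) C

def shiftChain (a : α) (C : Finset (Finset α)) : Finset (Finset α) :=
  (C.erase (C.sup id)).image (insert a)

/-- The second chain is empty when `C` is a single set, hence the filter. -/
def splitChain (a : α) (C : Finset (Finset α)) : Finset (Finset (Finset α)) :=
  ({extendChain a C, shiftChain a C} : Finset (Finset (Finset α))).filter Finset.Nonempty

theorem notMem_sup_of_forall_notMem (haC : ∀ S ∈ C, a ∉ S) : a ∉ C.sup id := by
  simpa only [mem_sup, id, not_exists, not_and] using haC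

theorem mem_extendChain_iff (haC : ∀ S ∈ C, a ∉ S) {S : Finset α} :
    S ∈ extendChain a C ↔ (a ∉ S ∧ S.erase a ∈ C) ∨ (a ∈ S ∧ S.erase a = C.sup id) := by
  rw [extendChain, mem_insert, or_comm]
  refine or_congr ⟨fun hS => ?_, fun ⟨haS, hS⟩ => ?_⟩ ⟨?_, fun ⟨haS, hS⟩ => ?_⟩
  · rw [erase_eq_of_notMem (haC S hS)]
    exact ⟨haC S hS, hS⟩
  · rwa [erase_eq_of_notMem haS] at hS
  · rintro rfl
    exact ⟨mem_insert_self _ _, erase_insert (notMem_sup_of_forall_notMem haC)⟩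
  · rw [← hS, insert_erase haS]

theorem mem_shiftChain_iff (haC : ∀ S ∈ C, a ∉ S) {S : Finset α} :
    S ∈ shiftChain a C ↔ a ∈ S ∧ S.erase a ∈ C ∧ S.erase a ≠ C.sup id := by
  simp only [shiftChain, mem_image, mem_erase]
  constructor
  · rintro ⟨T, ⟨hT_top, hT⟩, rfl⟩
    rw [erase_insert (haC T hT)]
    exact ⟨mem_insert_self _ _, hT, hT_top⟩
  · rintro ⟨haS, hS, hS_top⟩
    exact ⟨S.erase a, ⟨hS_top, hS⟩, insert_erase haS⟩

theorem existsUnique_mem_splitChain (haC : ∀ S ∈ C, a ∉ S) {S : Finset α} (hS : S.erase a ∈ C) :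
    ∃! D, D ∈ splitChain a C ∧ S ∈ D := by
  refine existsUnique_mem_filter_nonempty_pair ?_
  rw [mem_extendChain_iff haC, mem_shiftChain_iff haC]
  unfold Xor
  tauto

theorem erase_mem_of_mem_splitChain (haC : ∀ S ∈ C, a ∉ S) (htop : C.sup id ∈ C)
    {D : Finset (Finset α)} (hD : D ∈ splitChain a C) {S : Finset α} (hS : S ∈ D) :
    S.erase a ∈ C := by
  simp only [splitChain, mem_filter, mem_insert, mem_singleton] at hD
  rcases hD.1 with rfl | rfl
  · rcases (mem_extendChain_iff haC).1 hS with h | ⟨-, h⟩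
    · exact h.2
    · exact h ▸ htop
  · exact ((mem_shiftChain_iff haC).1 hS).2.1

theorem subset_powerset_insert_of_mem_splitChain {s : Finset α} (hC : C ⊆ s.powerset)
    {D : Finset (Finset α)} (hD : D ∈ splitChain a C) : D ⊆ (insert a s).powerset := by
  simp only [splitChain, mem_filter, mem_insert, mem_singleton] at hD
  intro S hS
  rw [mem_powerset]
  rcases hD.1 with rfl | rfl
  · rcases mem_insert.1 hS with rfl | hS
    · exact insert_subset_insert a (Finset.sup_le fun T hT => mem_powerset.1 (hC hT))
    · exact (mem_powerset.1 (hC hS)).trans (subset_insert _ _)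
  · obtain ⟨T, hT, rfl⟩ := mem_image.1 hS
    exact insert_subset_insert a (mem_powerset.1 (hC (mem_of_mem_erase hT)))

theorem IsSymmetricChain.extendChain {n : ℕ} (h : IsSymmetricChain n C) (haC : ∀ S ∈ C, a ∉ S) :
    IsSymmetricChain (n + 1) (extendChain a C) := by
  obtain ⟨r, hr, hC⟩ := h
  refine ⟨r, by omega, ?_⟩
  rw [show n + 1 - r = n - r + 1 by omega]
  refine hC.insert_of_forall_subset (by omega) ?_ fun S hS => ?_
  · rw [card_insert_of_notMem (notMem_sup_of_forall_notMem haC), hC.card_sup (by omega)]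
  · exact (le_sup (f := id) hS).trans (subset_insert _ _)

theorem IsSymmetricChain.shiftChain {n : ℕ} (h : IsSymmetricChain n C) (haC : ∀ S ∈ C, a ∉ S)
    (hne : (shiftChain a C).Nonempty) : IsSymmetricChain (n + 1) (shiftChain a C) := by
  obtain ⟨r, hr, hC⟩ := h
  have hlt := hC.lt_of_nonempty_erase_sup <| by
    simpa only [_root_.shiftChain, image_nonempty] using hne
  obtain ⟨k, hk⟩ : ∃ k, n - r = k + 1 := ⟨n - r - 1, by omega⟩
  rw [hk] at hC
  refine ⟨r + 1, by omega, ?_⟩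
  rw [show n + 1 - (r + 1) = k + 1 by omega]
  exact (hC.erase_sup (by omega)).image_insert fun S hS => haC S (mem_of_mem_erase hS)

theorem IsSymmetricChain.of_mem_splitChain {n : ℕ} (h : IsSymmetricChain n C)
    (haC : ∀ S ∈ C, a ∉ S) {D : Finset (Finset α)} (hD : D ∈ splitChain a C) :
    IsSymmetricChain (n + 1) D := by
  simp only [splitChain, mem_filter, mem_insert, mem_singleton] at hD
  obtain ⟨rfl | rfl, hne⟩ := hD
  · exact h.extendChain haC
  · exact h.shiftChain haC hne

end SplitChain

theorem exists_finpartition_powerset_isSymmetricChain (s : Finset α) :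
    ∃ P : Finpartition s.powerset, ∀ C ∈ P.parts, IsSymmetricChain #s C := by
  induction s using Finset.induction_on with
  | empty =>
    refine ⟨.indiscrete (by simp), fun C hC => ⟨0, le_rfl, fun _ => ∅, by simp, by simp, ?_⟩⟩
    simpa using hC
  | insert a s ha ih =>
    obtain ⟨P, hP⟩ := ih
    have haC : ∀ C ∈ P.parts, ∀ S ∈ C, a ∉ S := fun C hC S hS haS =>
      ha (mem_powerset.1 (P.subset hC hS) haS)
    refine ⟨.ofExistsUnique (P.parts.biUnion (splitChain a)) ?_ ?_ ?_, ?_⟩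
    · simp only [mem_biUnion]
      rintro D ⟨C, hC, hD⟩
      exact subset_powerset_insert_of_mem_splitChain (P.subset hC) hD
    · intro S hS
      refine P.existsUnique_mem_biUnion (x := S.erase a) ?_
        (fun C hC => existsUnique_mem_splitChain (haC C hC))
        (fun C hC _ hD hSD => erase_mem_of_mem_splitChain (haC C hC) (hP C hC).sup_mem hD hSD)
      simpa only [mem_powerset, ← subset_insert_iff] using hS
    · simp [splitChain]
    · simp only [Finpartition.ofExistsUnique_parts, mem_biUnion]
      rintro D ⟨C, hC, hD⟩
      rw [card_insert_of_notMem ha]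
      exact (hP C hC).of_mem_splitChain (haC C hC) hD

theorem symmetric_chain_decomposition (n : ℕ) :
    ∃ P : Finset (Finset (Finset (Fin n))),
      (∀ S : Finset (Fin n), ∃! C, C ∈ P ∧ S ∈ C) ∧
      (∀ C ∈ P, ∃ (r : ℕ) (f : ℕ → Finset (Fin n)), 2 * r ≤ n ∧
        (∀ i, r ≤ i → i ≤ n - r → (f i).card = i) ∧
        (∀ i, r ≤ i → i < n - r → f i ⊆ f (i + 1)) ∧
        C = (Finset.Icc r (n - r)).image f) := by
  obtain ⟨P, hP⟩ := exists_finpartition_powerset_isSymmetricChain (univ : Finset (Fin n))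
  refine ⟨P.parts, fun S => P.existsUnique_mem (by simp), fun C hC => ?_⟩
  have hC := hP C hC
  rw [card_univ, Fintype.card_fin] at hC
  obtain ⟨r, hr, f, hcard, hf, rfl⟩ := hC
  exact ⟨r, f, hr, hcard, hf, rfl⟩
end

section
/- Lubell's counting inequality: if 𝒜 is an antichain of subsets of {1,…,n}, then ∑_{S ∈ 𝒜} |S|!·(n − |S|)! ≤ n!. -/
open Finset Nat

theorem Nat.cast_factorial_mul_factorial_eq_mul_inv_choose {K : Type*} [Field K] [CharZero K]
    {n k : ℕ} (hk : k ≤ n) : ((k ! * (n - k)! : ℕ) : K) = n ! * (n.choose k : K)⁻¹ := by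
  rw [cast_choose K hk, inv_div, mul_div_cancel₀ _ (cast_ne_zero.2 (factorial_ne_zero n)), cast_mul]

theorem IsAntichain.sum_factorial_mul_factorial_le {α : Type*} [Fintype α]
    {𝒜 : Finset (Finset α)} (h𝒜 : IsAntichain (· ⊆ ·) (𝒜 : Set (Finset α))) :
    ∑ s ∈ 𝒜, (#s)! * (Fintype.card α - #s)! ≤ (Fintype.card α)! := by
  have hLYM := lubell_yamamoto_meshalkin_inequality_sum_inv_choose (𝕜 := ℚ) h𝒜
  suffices (∑ s ∈ 𝒜, (#s)! * (Fintype.card α - #s)! : ℚ) ≤ (Fintype.card α)! by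
    exact_mod_cast this
  calc (∑ s ∈ 𝒜, (#s)! * (Fintype.card α - #s)! : ℚ)
      = (Fintype.card α)! * ∑ s ∈ 𝒜, ((Fintype.card α).choose #s : ℚ)⁻¹ := by
        rw [mul_sum]
        refine sum_congr rfl fun s _ => ?_
        exact_mod_cast cast_factorial_mul_factorial_eq_mul_inv_choose (card_le_univ s)
    _ ≤ (Fintype.card α)! := mul_le_of_le_one_right (by positivity) hLYM

theorem lubell_counting (n : ℕ) (𝒜 : Finset (Finset (Fin n)))
    (h : ∀ S ∈ 𝒜, ∀ T ∈ 𝒜, S ≠ T → ¬ S ⊆ T) :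
    ∑ S ∈ 𝒜, (S.card).factorial * (n - S.card).factorial ≤ Nat.factorial n := by
  have h𝒜 : IsAntichain (· ⊆ ·) (𝒜 : Set (Finset (Fin n))) := fun S hS T hT => h S hS T hT
  simpa only [Fintype.card_fin] using h𝒜.sum_factorial_mul_factorial_le
end

section
/- The LYM inequality: if 𝒜 is an antichain of subsets of {1,…,n}, then ∑_{S ∈ 𝒜} 1 / C(n, |S|) ≤ 1. -/
theorem lym_inequality (n : ℕ) (𝒜 : Finset (Finset (Fin n)))
    (h : ∀ S ∈ 𝒜, ∀ T ∈ 𝒜, S ≠ T → ¬ S ⊆ T) :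
    ∑ S ∈ 𝒜, (1 : ℚ) / (Nat.choose n S.card) ≤ 1 := by
  have h𝒜 : IsAntichain (· ⊆ ·) (𝒜 : Set (Finset (Fin n))) := fun S hS T hT ↦ h S hS T hT
  simpa only [one_div, Fintype.card_fin] using
    Finset.lubell_yamamoto_meshalkin_inequality_sum_inv_choose (𝕜 := ℚ) h𝒜
end

section
/- Let V be the ℚ-vector space with basis indexed by all subsets of {1,…,n}, and let M, L : V → V be the linear maps defined on basis elements by M(S) = ∑_{j ∉ S} (S ∪ {j}) and L(S) = ∑_{i ∈ S} (S \ {i}). Then for every subset S of {1,…,n} with |S| = k, (M∘L − L∘M)(S) = (2k − n)·S; that is, on the span of the k-element subsets, ML − LM acts as (2k − n) times the identity. -/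
/-! Both `ML` and `LM` send `S` to a multiple of `S` plus the sum of all "swaps"
`(S \ {i}) ∪ {j}` with `i ∈ S`, `j ∉ S`. The swap terms agree, so the commutator is
`(|S| - |Sᶜ|) • S = (2k - n) • S`. -/

/-- The raising operator `M` on the ℚ-vector space with basis the subsets of `{1,…,n}`:
on a basis element `S` it is the sum of all `S ∪ {j}` with `j ∉ S`. -/
noncomputable def raiseOp (n : ℕ) : (Finset (Fin n) →₀ ℚ) →ₗ[ℚ] (Finset (Fin n) →₀ ℚ) :=
  Finsupp.lsum ℚ fun S : Finset (Fin n) =>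
    LinearMap.toSpanSingleton ℚ _ (∑ j ∈ Sᶜ, Finsupp.single (insert j S) (1 : ℚ))

/-- The lowering operator `L` on the ℚ-vector space with basis the subsets of `{1,…,n}`:
on a basis element `S` it is the sum of all `S \ {i}` with `i ∈ S`. -/
noncomputable def lowerOp (n : ℕ) : (Finset (Fin n) →₀ ℚ) →ₗ[ℚ] (Finset (Fin n) →₀ ℚ) :=
  Finsupp.lsum ℚ fun S : Finset (Fin n) =>
    LinearMap.toSpanSingleton ℚ _ (∑ i ∈ S, Finsupp.single (S.erase i) (1 : ℚ))

open Finset Finsupp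

namespace SubsetLattice

variable {n : ℕ}

@[simp]
lemma raiseOp_single (S : Finset (Fin n)) :
    raiseOp n (single S 1) = ∑ j ∈ Sᶜ, single (insert j S) 1 := by
  simp [raiseOp]

@[simp]
lemma lowerOp_single (S : Finset (Fin n)) :
    lowerOp n (single S 1) = ∑ i ∈ S, single (S.erase i) 1 := by
  simp [lowerOp]

noncomputable def swapSum (S : Finset (Fin n)) : Finset (Fin n) →₀ ℚ :=
  ∑ i ∈ S, ∑ j ∈ Sᶜ, single (insert j (S.erase i)) 1

lemma raiseOp_lowerOp_single (S : Finset (Fin n)) :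
    raiseOp n (lowerOp n (single S 1)) = #S • single S 1 + swapSum S := by
  have hterm : ∀ i ∈ S, raiseOp n (single (S.erase i) 1) =
      single S 1 + ∑ j ∈ Sᶜ, single (insert j (S.erase i)) 1 := fun i hi => by
    rw [raiseOp_single, compl_erase, sum_insert (by simpa using hi), insert_erase hi]
  rw [lowerOp_single, map_sum, sum_congr rfl hterm, sum_add_distrib, sum_const, swapSum]

lemma lowerOp_raiseOp_single (S : Finset (Fin n)) :
    lowerOp n (raiseOp n (single S 1)) = #Sᶜ • single S 1 + swapSum S := by
  have hterm : ∀ j ∈ Sᶜ, lowerOp n (single (insert j S) 1) =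
      single S 1 + ∑ i ∈ S, single (insert j (S.erase i)) 1 := fun j hj => by
    have hjS : j ∉ S := by simpa using hj
    rw [lowerOp_single, sum_insert hjS, erase_insert hjS]
    congr 1
    exact sum_congr rfl fun i hi => by
      rw [erase_insert_of_ne (ne_of_mem_of_not_mem hi hjS).symm]
  rw [raiseOp_single, map_sum, sum_congr rfl hterm, sum_add_distrib, sum_const, swapSum,
    Finset.sum_comm]

end SubsetLattice

open SubsetLattice in
theorem commutator_on_basis (n k : ℕ) (S : Finset (Fin n)) (hS : S.card = k) :
    raiseOp n (lowerOp n (Finsupp.single S (1 : ℚ))) -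
      lowerOp n (raiseOp n (Finsupp.single S (1 : ℚ))) =
    ((2 * (k : ℚ) - n)) • Finsupp.single S (1 : ℚ) := by
  have hk : k ≤ n := hS ▸ card_le_univ S |>.trans_eq (Fintype.card_fin n)
  have hcompl : #Sᶜ = n - k := by rw [card_compl, Fintype.card_fin, hS]
  rw [raiseOp_lowerOp_single, lowerOp_raiseOp_single, add_sub_add_right_eq_sub, hS, hcompl,
    ← Nat.cast_smul_eq_nsmul ℚ, ← Nat.cast_smul_eq_nsmul ℚ, ← sub_smul]
  congr 1
  push_cast [hk]
  ring
end

section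
/- Let V be the ℚ-vector space with basis indexed by all subsets of {1,…,n}, and let M : V → V be the linear map defined on basis elements by M(S) = ∑_{j ∉ S} (S ∪ {j}). If 2k < n, then M is injective on the span of the k-element subsets: for every f in the span of the basis vectors indexed by subsets of cardinality k, M(f) = 0 implies f = 0. -/
open Finset

lemma Finset.filter_erase_eq_filter_insert_eq {α : Type*} [Fintype α] [DecidableEq α]
    (S T : Finset α) :
    {i ∈ T | T.erase i = S} = {j ∈ Sᶜ | insert j S = T} := by
  ext a
  simp only [mem_filter, mem_compl]
  constructor
  · rintro ⟨haT, rfl⟩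
    exact ⟨notMem_erase a T, insert_erase haT⟩
  · rintro ⟨haS, rfl⟩
    exact ⟨mem_insert_self a S, erase_insert haS⟩

section

variable {n : ℕ}

lemma raiseOp_apply (f : Finset (Fin n) →₀ ℚ) (T : Finset (Fin n)) :
    raiseOp n f T = ∑ i ∈ T, f (T.erase i) := by
  induction f using Finsupp.induction_linear with
  | zero => simp
  | add f₁ f₂ h₁ h₂ => simp [h₁, h₂, sum_add_distrib]
  | single S a =>
    simp only [raiseOp, Finsupp.lsum_single, LinearMap.toSpanSingleton_apply,
      Finsupp.smul_apply, Finsupp.finsetSum_apply, Finsupp.single_apply, smul_eq_mul,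
      eq_comm (a := S)]
    rw [← sum_filter, ← sum_filter, filter_erase_eq_filter_insert_eq]
    simp [mul_comm]

lemma lowerOp_apply (g : Finset (Fin n) →₀ ℚ) (S : Finset (Fin n)) :
    lowerOp n g S = ∑ j ∈ Sᶜ, g (insert j S) := by
  induction g using Finsupp.induction_linear with
  | zero => simp
  | add g₁ g₂ h₁ h₂ => simp [h₁, h₂, sum_add_distrib]
  | single T a =>
    simp only [lowerOp, Finsupp.lsum_single, LinearMap.toSpanSingleton_apply,
      Finsupp.smul_apply, Finsupp.finsetSum_apply, Finsupp.single_apply, smul_eq_mul,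
      eq_comm (a := T)]
    rw [← sum_filter, ← sum_filter, filter_erase_eq_filter_insert_eq]
    simp [mul_comm]

lemma raiseOp_dotProduct (f g : Finset (Fin n) →₀ ℚ) :
    ⇑(raiseOp n f) ⬝ᵥ ⇑g = ⇑f ⬝ᵥ ⇑(lowerOp n g) := by
  simp only [dotProduct, raiseOp_apply, lowerOp_apply, sum_mul, mul_sum]
  rw [sum_sigma', sum_sigma']
  refine sum_nbij' (fun p => ⟨p.1.erase p.2, p.2⟩) (fun p => ⟨insert p.2 p.1, p.2⟩)
    ?_ ?_ ?_ ?_ ?_ <;> rintro ⟨_, _⟩ <;> simp_all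

lemma lowerOp_raiseOp_apply (f : Finset (Fin n) →₀ ℚ) (S : Finset (Fin n)) :
    lowerOp n (raiseOp n f) S = raiseOp n (lowerOp n f) S + ((n : ℚ) - 2 * #S) * f S := by
  have hLM : lowerOp n (raiseOp n f) S =
      #Sᶜ * f S + ∑ j ∈ Sᶜ, ∑ i ∈ S, f (insert j (S.erase i)) := by
    simp only [lowerOp_apply, raiseOp_apply]
    rw [← nsmul_eq_mul, ← sum_const, ← sum_add_distrib]
    refine sum_congr rfl fun j hj => ?_
    have hjS : j ∉ S := mem_compl.mp hj
    rw [sum_insert hjS, erase_insert hjS]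
    congr 1
    refine sum_congr rfl fun i hi => ?_
    rw [erase_insert_of_ne (ne_of_mem_of_not_mem hi hjS).symm]
  have hML : raiseOp n (lowerOp n f) S =
      #S * f S + ∑ i ∈ S, ∑ j ∈ Sᶜ, f (insert j (S.erase i)) := by
    simp only [lowerOp_apply, raiseOp_apply]
    rw [← nsmul_eq_mul, ← sum_const, ← sum_add_distrib]
    refine sum_congr rfl fun i hi => ?_
    rw [compl_erase, sum_insert (notMem_compl.mpr hi), insert_erase hi]
  rw [hLM, hML, sum_comm, card_compl, Fintype.card_fin,
    Nat.cast_sub (S.card_le_univ.trans_eq (Fintype.card_fin n))]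
  ring

lemma lowerOp_raiseOp_of_mem_supported {k : ℕ} {f : Finset (Fin n) →₀ ℚ}
    (hf : f ∈ Finsupp.supported ℚ ℚ {S : Finset (Fin n) | #S = k}) :
    lowerOp n (raiseOp n f) = raiseOp n (lowerOp n f) + ((n : ℚ) - 2 * k) • f := by
  ext S
  rw [lowerOp_raiseOp_apply, Finsupp.add_apply, Finsupp.smul_apply, smul_eq_mul]
  by_cases hS : #S = k
  · rw [hS]
  · rw [(Finsupp.mem_supported' _ _).mp hf S hS, mul_zero, mul_zero]

lemma raiseOp_dotProduct_raiseOp_of_mem_supported {k : ℕ} {f : Finset (Fin n) →₀ ℚ}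
    (hf : f ∈ Finsupp.supported ℚ ℚ {S : Finset (Fin n) | #S = k}) :
    ⇑(raiseOp n f) ⬝ᵥ ⇑(raiseOp n f) =
      ⇑(lowerOp n f) ⬝ᵥ ⇑(lowerOp n f) + ((n : ℚ) - 2 * k) * (⇑f ⬝ᵥ ⇑f) := by
  rw [raiseOp_dotProduct, lowerOp_raiseOp_of_mem_supported hf, Finsupp.coe_add,
    Finsupp.coe_smul, dotProduct_add, dotProduct_smul, smul_eq_mul, dotProduct_comm,
    raiseOp_dotProduct]

end

theorem raiseOp_injective_on_span (n k : ℕ) (h : 2 * k < n)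
    (f : Finset (Fin n) →₀ ℚ)
    (hf : f ∈ Submodule.span ℚ
      {g : Finset (Fin n) →₀ ℚ | ∃ S : Finset (Fin n), S.card = k ∧ g = Finsupp.single S 1})
    (hMf : raiseOp n f = 0) : f = 0 := by
  have hsupp : f ∈ Finsupp.supported ℚ ℚ {S : Finset (Fin n) | #S = k} := by
    simpa [Finsupp.supported_eq_span_single, Set.image, eq_comm] using hf
  have hgap : (0 : ℚ) < n - 2 * k := by
    rw [sub_pos]
    exact_mod_cast h
  have hnorm := raiseOp_dotProduct_raiseOp_of_mem_supported hsupp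
  rw [hMf, Finsupp.coe_zero, zero_dotProduct] at hnorm
  have hsq_nonneg (v : Finset (Fin n) → ℚ) : 0 ≤ v ⬝ᵥ v :=
    sum_nonneg fun _ _ => mul_self_nonneg _
  have hff : ⇑f ⬝ᵥ ⇑f = 0 := by
    nlinarith [hsq_nonneg (lowerOp n f), hsq_nonneg f]
  simpa using hff
end
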